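/- Guards placed at the vertices v1, v4, v7 of the nonagon P do not cover P: there exists a point q ∈ P such that none of the closed segments [v1, q], [v4, q], [v7, q] is contained in P. -/
import Mathlib


open Set

/-- The vertices of the nonagon, in cyclic order. -/
noncomputable def v : Fin 9 → ℝ × ℝ :=
  ![(0, 0), (1, 5), (0, 8), (2, 4), (6, 11), (4, 7), (15, -1), (9, 3), (6, 4)]

/-- The nonagon, realized as the union of the seven triangles of a triangulation. -/
noncomputable def P : Set (ℝ × ℝ) :=
  convexHull ℝ {v 3, v 4, v 5} ∪ convexHull ℝ {v 3, v 5, v 8} ∪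
  convexHull ℝ {v 5, v 6, v 7} ∪ convexHull ℝ {v 5, v 7, v 8} ∪
  convexHull ℝ {v 3, v 8, v 0} ∪ convexHull ℝ {v 3, v 0, v 1} ∪
  convexHull ℝ {v 3, v 1, v 2}

lemma halfspace_convex (a b c : ℝ) : Convex ℝ {x : ℝ × ℝ | a * x.1 + b * x.2 ≤ c} := by
  have : IsLinearMap ℝ (fun x : ℝ × ℝ => a * x.1 + b * x.2) := by
    constructor
    · intro x y; simp [Prod.fst_add, Prod.snd_add]; ring
    · intro r x; simp [Prod.smul_fst, Prod.smul_snd, smul_eq_mul]; ring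
  exact convex_halfSpace_le this c

lemma sep {p₁ p₂ p₃ m : ℝ × ℝ} (a b c : ℝ)
    (h1 : a * p₁.1 + b * p₁.2 ≤ c) (h2 : a * p₂.1 + b * p₂.2 ≤ c)
    (h3 : a * p₃.1 + b * p₃.2 ≤ c) (hm : c < a * m.1 + b * m.2) :
    m ∉ convexHull ℝ ({p₁, p₂, p₃} : Set (ℝ × ℝ)) := by
  intro h
  have hsub : ({p₁, p₂, p₃} : Set (ℝ × ℝ)) ⊆ {x : ℝ × ℝ | a * x.1 + b * x.2 ≤ c} := by
    rintro x (rfl | rfl | rfl) <;> assumption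
  have := convexHull_min hsub (halfspace_convex a b c) h
  exact absurd this (not_le.2 hm)

lemma hv0 : v 0 = (0, 0) := rfl
lemma hv1 : v 1 = (1, 5) := rfl
lemma hv2 : v 2 = (0, 8) := rfl
lemma hv3 : v 3 = (2, 4) := rfl
lemma hv4 : v 4 = (6, 11) := rfl
lemma hv5 : v 5 = (4, 7) := rfl
lemma hv6 : v 6 = (15, -1) := rfl
lemma hv7 : v 7 = (9, 3) := rfl
lemma hv8 : v 8 = (6, 4) := rfl

lemma not_in_P {m : ℝ × ℝ}
    (s1 : m ∉ convexHull ℝ ({v 3, v 4, v 5} : Set (ℝ × ℝ)))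
    (s2 : m ∉ convexHull ℝ ({v 3, v 5, v 8} : Set (ℝ × ℝ)))
    (s3 : m ∉ convexHull ℝ ({v 5, v 6, v 7} : Set (ℝ × ℝ)))
    (s4 : m ∉ convexHull ℝ ({v 5, v 7, v 8} : Set (ℝ × ℝ)))
    (s5 : m ∉ convexHull ℝ ({v 3, v 8, v 0} : Set (ℝ × ℝ)))
    (s6 : m ∉ convexHull ℝ ({v 3, v 0, v 1} : Set (ℝ × ℝ)))
    (s7 : m ∉ convexHull ℝ ({v 3, v 1, v 2} : Set (ℝ × ℝ))) : m ∉ P := by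
  intro h
  rcases h with ((((((h | h) | h) | h) | h) | h) | h) <;>
    [exact s1 h; exact s2 h; exact s3 h; exact s4 h; exact s5 h; exact s6 h; exact s7 h]

/-- Guards placed at the vertices `v 1`, `v 4`, `v 7` do not cover the nonagon `P`:
some point `q ∈ P` is visible from none of them. -/
theorem nonagon_not_covered_by_v1_v4_v7 :
    ∃ q ∈ P, ¬ segment ℝ (v 1) q ⊆ P ∧ ¬ segment ℝ (v 4) q ⊆ P ∧
      ¬ segment ℝ (v 7) q ⊆ P := by
  refine ⟨(3, 4), ?_, ?_, ?_, ?_⟩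
  · -- q ∈ P : q is on the segment from v 3 to v 8
    have h3 : v 3 ∈ convexHull ℝ ({v 3, v 8, v 0} : Set (ℝ × ℝ)) :=
      subset_convexHull ℝ _ (by simp)
    have h8 : v 8 ∈ convexHull ℝ ({v 3, v 8, v 0} : Set (ℝ × ℝ)) :=
      subset_convexHull ℝ _ (by simp)
    have hq : ((3, 4) : ℝ × ℝ) ∈ segment ℝ (v 3) (v 8) := by
      refine ⟨3/4, 1/4, by norm_num, by norm_num, by norm_num, ?_⟩
      rw [hv3, hv8]
      norm_num [Prod.ext_iff, Prod.smul_fst, Prod.smul_snd, Prod.fst_add, Prod.snd_add,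
        smul_eq_mul]
    have := (convex_convexHull ℝ _).segment_subset h3 h8 hq
    exact Or.inl (Or.inl (Or.inr this))
  · -- not visible from v 1 = (1,5): midpoint (2, 9/2) ∉ P
    intro hsub
    have hm : ((2, 9/2) : ℝ × ℝ) ∈ segment ℝ (v 1) ((3, 4) : ℝ × ℝ) := by
      refine ⟨1/2, 1/2, by norm_num, by norm_num, by norm_num, ?_⟩
      rw [hv1]
      norm_num [Prod.ext_iff, Prod.smul_fst, Prod.smul_snd, Prod.fst_add, Prod.snd_add,
        smul_eq_mul]
    refine not_in_P ?_ ?_ ?_ ?_ ?_ ?_ ?_ (hsub hm) <;>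
      [exact sep (-8) 1 (-12) (by rw [hv3]; norm_num) (by rw [hv4]; norm_num)
          (by rw [hv5]; norm_num) (by norm_num);
       exact sep (-8) 1 (-12) (by rw [hv3]; norm_num) (by rw [hv5]; norm_num)
          (by rw [hv8]; norm_num) (by norm_num);
       exact sep (-8) (-8) (-88) (by rw [hv5]; norm_num) (by rw [hv6]; norm_num)
          (by rw [hv7]; norm_num) (by norm_num);
       exact sep (-8) (-8) (-80) (by rw [hv5]; norm_num) (by rw [hv7]; norm_num)
          (by rw [hv8]; norm_num) (by norm_num);
       exact sep (-8) 4 0 (by rw [hv3]; norm_num) (by rw [hv8]; norm_num)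
          (by rw [hv0]; norm_num) (by norm_num);
       exact sep 1 1 6 (by rw [hv3]; norm_num) (by rw [hv0]; norm_num)
          (by rw [hv1]; norm_num) (by norm_num);
       exact sep 2 1 8 (by rw [hv3]; norm_num) (by rw [hv1]; norm_num)
          (by rw [hv2]; norm_num) (by norm_num)]
  · -- not visible from v 4 = (6,11): midpoint (9/2, 15/2) ∉ P
    intro hsub
    have hm : ((9/2, 15/2) : ℝ × ℝ) ∈ segment ℝ (v 4) ((3, 4) : ℝ × ℝ) := by
      refine ⟨1/2, 1/2, by norm_num, by norm_num, by norm_num, ?_⟩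
      rw [hv4]
      norm_num [Prod.ext_iff, Prod.smul_fst, Prod.smul_snd, Prod.fst_add, Prod.snd_add,
        smul_eq_mul]
    refine not_in_P ?_ ?_ ?_ ?_ ?_ ?_ ?_ (hsub hm) <;>
      [exact sep 2 (-1) 1 (by rw [hv3]; norm_num) (by rw [hv4]; norm_num)
          (by rw [hv5]; norm_num) (by norm_num);
       exact sep (-7) 8 28 (by rw [hv3]; norm_num) (by rw [hv5]; norm_num)
          (by rw [hv8]; norm_num) (by norm_num);
       exact sep (-7) 8 28 (by rw [hv5]; norm_num) (by rw [hv6]; norm_num)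
          (by rw [hv7]; norm_num) (by norm_num);
       exact sep (-7) 8 28 (by rw [hv5]; norm_num) (by rw [hv7]; norm_num)
          (by rw [hv8]; norm_num) (by norm_num);
       exact sep (-8) 6 8 (by rw [hv3]; norm_num) (by rw [hv8]; norm_num)
          (by rw [hv0]; norm_num) (by norm_num);
       exact sep (-5) 8 35 (by rw [hv3]; norm_num) (by rw [hv0]; norm_num)
          (by rw [hv1]; norm_num) (by norm_num);
       exact sep 1 0 2 (by rw [hv3]; norm_num) (by rw [hv1]; norm_num)
          (by rw [hv2]; norm_num) (by norm_num)]
  · -- not visible from v 7 = (9,3): midpoint (6, 7/2) ∉ P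
    intro hsub
    have hm : ((6, 7/2) : ℝ × ℝ) ∈ segment ℝ (v 7) ((3, 4) : ℝ × ℝ) := by
      refine ⟨1/2, 1/2, by norm_num, by norm_num, by norm_num, ?_⟩
      rw [hv7]
      norm_num [Prod.ext_iff, Prod.smul_fst, Prod.smul_snd, Prod.fst_add, Prod.snd_add,
        smul_eq_mul]
    refine not_in_P ?_ ?_ ?_ ?_ ?_ ?_ ?_ (hsub hm) <;>
      [exact sep 0 (-8) (-32) (by rw [hv3]; norm_num) (by rw [hv4]; norm_num)
          (by rw [hv5]; norm_num) (by norm_num);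
       exact sep 0 (-8) (-32) (by rw [hv3]; norm_num) (by rw [hv5]; norm_num)
          (by rw [hv8]; norm_num) (by norm_num);
       exact sep (-8) (-8) (-88) (by rw [hv5]; norm_num) (by rw [hv6]; norm_num)
          (by rw [hv7]; norm_num) (by norm_num);
       exact sep (-8) (-8) (-80) (by rw [hv5]; norm_num) (by rw [hv7]; norm_num)
          (by rw [hv8]; norm_num) (by norm_num);
       exact sep 1 (-1) 2 (by rw [hv3]; norm_num) (by rw [hv8]; norm_num)
          (by rw [hv0]; norm_num) (by norm_num);
       exact sep 1 (-1) 0 (by rw [hv3]; norm_num) (by rw [hv0]; norm_num)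
          (by rw [hv1]; norm_num) (by norm_num);
       exact sep 0 (-8) (-32) (by rw [hv3]; norm_num) (by rw [hv1]; norm_num)
          (by rw [hv2]; norm_num) (by norm_num)]
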